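/- For all k ≥ 2 and n ≥ 1, the number of permutations w ∈ S_{kn+k-1} whose ascent/descent vector is a (k-1)-ballot sequence equals A(n, kn+k-1)/(n+1), where A(m,N) is the number of permutations of [N] with m descents. -/

import Mathlib

/-!
Prepending the new largest value `N + 1` turns `w ∈ S_N` into a cyclic word on `ℤ/(N+1)` with its
largest value at position `0`. Reading cyclic ascents as steps `+1` and cyclic descents as steps
`-(k-1)`, the lattice path closes up exactly when `w` has `n` descents (as `N + 1 = k (n + 1)`),
and `w` is `(k-1)`-Dyck exactly when the path started right after the largest value never goes
below its start.

Adding `c` to all values and rotating the largest value back to position `0` is invertible, and a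
cycle lemma says that exactly `k` of the `N + 1` value shifts of a closed word are ballot:
shifting the values by one moves the minimum height of the path by `k [top at 0] - [ballot]`,
and these changes cancel around the cycle. Double counting pairs (shift, word) then gives
`k · A(n, N) = (N + 1) · #Dyck`.
-/

open scoped Classical

/-- Number of descents of `w` occurring among the first `ℓ` positions
(0-indexed: position `i` is a descent if `w i > w (i+1)`). -/
noncomputable def descentsIn {N : ℕ} (w : Equiv.Perm (Fin N)) (ℓ : ℕ) : ℕ :=
  ((Finset.range ℓ).filter (fun i =>
    ∃ h : i + 1 < N, w ⟨i + 1, h⟩ < w ⟨i, Nat.lt_of_succ_lt h⟩)).card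

/-- Total number of descents of a permutation of `[N]`. -/
noncomputable def descents {N : ℕ} (w : Equiv.Perm (Fin N)) : ℕ :=
  descentsIn w (N - 1)

/-- The Eulerian number `A(m, N)`: the number of permutations of `[N]`
with exactly `m` descents. -/
noncomputable def eulerian (m N : ℕ) : ℕ :=
  (Finset.univ.filter (fun w : Equiv.Perm (Fin N) => descents w = m)).card


/-- `w ∈ S_{kn+k-1}` is a `(k-1)`-Dyck permutation: its ascent/descent vector
is a `(k-1)`-ballot sequence, i.e. every initial segment has at least `k-1`
times as many ascents (0's) as descents (1's); such a permutation has exactly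
`n` descents (its lattice path ends at `((k-1)n, n)`). -/
noncomputable def IsKDyckPerm (k n : ℕ) (w : Equiv.Perm (Fin (k * n + k - 1))) : Prop :=
  descents w = n ∧
    ∀ ℓ ≤ k * n + k - 2, (k - 1) * descentsIn w ℓ ≤ ℓ - descentsIn w ℓ

open Finset

namespace ZMod

variable {M : ℕ}

theorem val_neg_one_eq [Fact (1 < M)] : (-1 : ZMod M).val = M - 1 := by
  rw [neg_val, if_neg one_ne_zero, val_one]

theorem val_lt_val_neg_one [Fact (1 < M)] {a : ZMod M} (ha : a ≠ -1) :
    a.val < (-1 : ZMod M).val := by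
  have hne : a.val ≠ (-1 : ZMod M).val := fun h => ha (val_injective M h)
  have := a.val_lt
  rw [val_neg_one_eq] at hne ⊢
  omega

theorem val_add_one_of_ne_neg_one [Fact (1 < M)] {a : ZMod M} (ha : a ≠ -1) :
    (a + 1).val = a.val + 1 := by
  have := val_lt_val_neg_one ha
  rw [val_neg_one_eq] at this
  rw [val_add, val_one, Nat.mod_eq_of_lt (by omega)]

theorem sum_range_natCast [NeZero M] {β : Type*} [AddCommMonoid β] (f : ZMod M → β) :
    ∑ i ∈ range M, f i = ∑ x, f x :=
  sum_nbij' (↑) val (fun _ _ => mem_univ _) (fun x _ => mem_range.2 x.val_lt)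
    (fun _ hi => val_cast_of_lt (mem_range.1 hi)) (fun x _ => natCast_zmod_val x) fun _ _ => rfl

end ZMod

theorem Nat.sub_one_mul_le_sub_iff {k d ℓ : ℕ} (hd : d ≤ ℓ) :
    (k - 1) * d ≤ ℓ - d ↔ k * d ≤ ℓ := by
  cases k with
  | zero => simp
  | succ k =>
    simp only [Nat.add_sub_cancel, add_mul, one_mul]
    omega

theorem descentsIn_self {N : ℕ} (w : Equiv.Perm (Fin N)) : descentsIn w N = descents w := by
  cases N with
  | zero => rfl
  | succ m =>
    rw [descents, descentsIn, descentsIn, Nat.add_sub_cancel, range_add_one, filter_insert,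
      if_neg (by simp)]

theorem descentsIn_le {N : ℕ} (w : Equiv.Perm (Fin N)) (ℓ : ℕ) : descentsIn w ℓ ≤ ℓ :=
  (card_filter_le _ _).trans (card_range ℓ).le

namespace CyclicPerm

variable {M : ℕ}

/-- Values are compared through `ZMod.val`, so `-1` is the largest value. -/
def IsCyclicDescent (h : Equiv.Perm (ZMod M)) (x : ZMod M) : Prop :=
  (h (x + 1)).val < (h x).val

noncomputable def stepWeight (k : ℕ) (h : Equiv.Perm (ZMod M)) (x : ZMod M) : ℤ :=
  if IsCyclicDescent h x then 1 - k else 1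

noncomputable def height (k : ℕ) (h : Equiv.Perm (ZMod M)) (x : ZMod M) : ℤ :=
  ∑ i ∈ range x.val, stepWeight k h i

noncomputable def totalWeight [NeZero M] (k : ℕ) (h : Equiv.Perm (ZMod M)) : ℤ :=
  ∑ x, stepWeight k h x

noncomputable def minHeight [NeZero M] (k : ℕ) (h : Equiv.Perm (ZMod M)) : ℤ :=
  univ.inf' univ_nonempty (height k h)

def topPos (h : Equiv.Perm (ZMod M)) : ZMod M := h.symm (-1)

/-- Read cyclically from the position just after the largest value, the lattice path of `h`
never goes below its starting height. -/
def IsCyclicBallot (k : ℕ) (h : Equiv.Perm (ZMod M)) : Prop :=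
  ∀ x, height k h (topPos h + 1) ≤ height k h x

def valueShift (c : ZMod M) (h : Equiv.Perm (ZMod M)) : Equiv.Perm (ZMod M) :=
  h.trans (Equiv.addRight c)

def rotate (r : ZMod M) (h : Equiv.Perm (ZMod M)) : Equiv.Perm (ZMod M) :=
  (Equiv.addRight r).trans h

def normalize (h : Equiv.Perm (ZMod M)) : Equiv.Perm (ZMod M) :=
  rotate (topPos h) h

noncomputable def balancedPerms [NeZero M] (k : ℕ) : Finset (Equiv.Perm (ZMod M)) :=
  univ.filter fun g => g 0 = -1 ∧ totalWeight k g = 0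

variable {k : ℕ} {h : Equiv.Perm (ZMod M)}

@[simp] theorem valueShift_apply (c x : ZMod M) : valueShift c h x = h x + c := rfl

@[simp] theorem rotate_apply (r x : ZMod M) : rotate r h x = h (x + r) := rfl

theorem eq_topPos_iff {x : ZMod M} : x = topPos h ↔ h x = -1 := Equiv.eq_symm_apply h

@[simp] theorem apply_topPos : h (topPos h) = -1 := h.apply_symm_apply _

theorem mem_balancedPerms [NeZero M] {g : Equiv.Perm (ZMod M)} :
    g ∈ balancedPerms k ↔ g 0 = -1 ∧ totalWeight k g = 0 := by
  simp [balancedPerms]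

theorem stepWeight_eq (x : ZMod M) :
    stepWeight k h x = 1 - k * (if IsCyclicDescent h x then 1 else 0) := by
  unfold stepWeight
  split_ifs <;> ring

theorem sum_stepWeight {ι : Type*} (s : Finset ι) (f : ι → ZMod M) :
    ∑ i ∈ s, stepWeight k h (f i) = #s - k * #(s.filter fun i => IsCyclicDescent h (f i)) := by
  simp only [stepWeight_eq, sum_sub_distrib, ← mul_sum, natCast_card_filter, sum_const,
    nsmul_eq_mul, mul_one]

@[simp] theorem height_zero : height k h 0 = 0 := by simp [height]

@[simp] theorem valueShift_zero : valueShift 0 h = h := by ext; simp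

theorem valueShift_add (a b : ZMod M) :
    valueShift (a + b) h = valueShift b (valueShift a h) := by
  ext; simp [add_assoc]

@[simp] theorem rotate_zero : rotate 0 h = h := by ext; simp

theorem valueShift_rotate (c r : ZMod M) :
    valueShift c (rotate r h) = rotate r (valueShift c h) := rfl

theorem topPos_rotate (r : ZMod M) : topPos (rotate r h) = topPos h - r := by
  rw [eq_comm, eq_topPos_iff, rotate_apply, sub_add_cancel, apply_topPos]

theorem normalize_apply_zero : normalize h 0 = -1 := by simp [normalize]

theorem normalize_rotate (r : ZMod M) : normalize (rotate r h) = normalize h := by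
  ext x
  simp [normalize, topPos_rotate, add_assoc]

theorem normalize_of_apply_zero (h0 : h 0 = -1) : normalize h = h := by
  rw [normalize, ← eq_topPos_iff.2 h0, rotate_zero]

theorem normalize_valueShift_normalize (c : ZMod M) :
    normalize (valueShift c (normalize h)) = normalize (valueShift c h) := by
  rw [show normalize h = rotate (topPos h) h from rfl, valueShift_rotate, normalize_rotate]

theorem normalize_valueShift_neg (h0 : h 0 = -1) (c : ZMod M) :
    normalize (valueShift (-c) (normalize (valueShift c h))) = h := by
  rw [normalize_valueShift_normalize, ← valueShift_add, add_neg_cancel, valueShift_zero,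
    normalize_of_apply_zero h0]

theorem isCyclicDescent_rotate (r x : ZMod M) :
    IsCyclicDescent (rotate r h) x ↔ IsCyclicDescent h (x + r) := by
  simp only [IsCyclicDescent, rotate_apply, add_right_comm x 1 r]

theorem stepWeight_rotate (r x : ZMod M) :
    stepWeight k (rotate r h) x = stepWeight k h (x + r) := by
  simp only [stepWeight, isCyclicDescent_rotate]

theorem totalWeight_rotate [NeZero M] (r : ZMod M) :
    totalWeight k (rotate r h) = totalWeight k h := by
  simp only [totalWeight, stepWeight_rotate]
  exact Fintype.sum_equiv (Equiv.addRight r) _ _ fun _ => rfl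

section Nontrivial

variable [Fact (1 < M)]

theorem isCyclicDescent_topPos : IsCyclicDescent h (topPos h) := by
  have hne : h (topPos h + 1) ≠ -1 := by
    rw [Ne, ← eq_topPos_iff, add_eq_left]
    exact one_ne_zero
  unfold IsCyclicDescent
  rw [apply_topPos]
  exact ZMod.val_lt_val_neg_one hne

theorem not_isCyclicDescent_of_apply_add_one {x : ZMod M} (hx : h (x + 1) = -1) :
    ¬ IsCyclicDescent h x := by
  unfold IsCyclicDescent
  rw [hx, ZMod.val_neg_one_eq]
  have := (h x).val_lt
  omega

theorem stepWeight_topPos : stepWeight k h (topPos h) = 1 - k :=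
  if_pos isCyclicDescent_topPos

/-- On a closed path (`totalWeight k h = 0`) the recursion also holds across position `-1`. -/
theorem height_add_one (hS : totalWeight k h = 0) (x : ZMod M) :
    height k h (x + 1) = height k h x + stepWeight k h x := by
  by_cases hx : x = -1
  · have hcast : ((M - 1 : ℕ) : ZMod M) = -1 := by
      rw [← ZMod.val_neg_one_eq, ZMod.natCast_zmod_val]
    subst hx
    rw [neg_add_cancel, height_zero, height, ZMod.val_neg_one_eq, ← hcast, ← sum_range_succ,
      Nat.sub_add_cancel NeZero.one_le, ZMod.sum_range_natCast, ← totalWeight, hS]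
  · rw [height, height, ZMod.val_add_one_of_ne_neg_one hx, sum_range_succ,
      ZMod.natCast_zmod_val]

theorem height_topPos (hS : totalWeight k h = 0) :
    height k h (topPos h) = height k h (topPos h + 1) + (k - 1) := by
  rw [height_add_one hS, stepWeight_topPos]
  ring

theorem height_rotate (hS : totalWeight k h = 0) (r x : ZMod M) :
    height k (rotate r h) x = height k h (x + r) - height k h r := by
  obtain ⟨n, rfl⟩ := ZMod.natCast_zmod_surjective x
  induction n with
  | zero => simp
  | succ n ih =>
    rw [Nat.cast_succ, height_add_one ((totalWeight_rotate r).trans hS), ih, stepWeight_rotate,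
      add_right_comm, height_add_one hS]
    ring

theorem isCyclicBallot_rotate (hS : totalWeight k h = 0) (r : ZMod M) :
    IsCyclicBallot k (rotate r h) ↔ IsCyclicBallot k h := by
  have htop : topPos h - r + 1 + r = topPos h + 1 := by ring
  simp only [IsCyclicBallot, height_rotate hS, topPos_rotate, htop, sub_le_sub_iff_right]
  exact ⟨fun H y => by simpa using H (y - r), fun H x => H (x + r)⟩

theorem isCyclicDescent_valueShift_one_iff {x : ZMod M} (hx : h x ≠ -1)
    (hx1 : h (x + 1) ≠ -1) : IsCyclicDescent (valueShift 1 h) x ↔ IsCyclicDescent h x := by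
  simp only [IsCyclicDescent, valueShift_apply, ZMod.val_add_one_of_ne_neg_one hx,
    ZMod.val_add_one_of_ne_neg_one hx1, add_lt_add_iff_right]

/-- Raising all values by one turns the largest value into the smallest, which moves the
descent at `topPos h` to the position just before it. -/
theorem stepWeight_valueShift_one (x : ZMod M) :
    stepWeight k (valueShift 1 h) x = stepWeight k h x + (if x = topPos h then (k : ℤ) else 0)
      - (if x + 1 = topPos h then (k : ℤ) else 0) := by
  have hx1 : x + 1 ≠ x := by simp
  by_cases hx : x = topPos h
  · have hσ : ¬ IsCyclicDescent (valueShift 1 h) x := by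
      simp [IsCyclicDescent, eq_topPos_iff.1 hx]
    subst hx
    simp [stepWeight, hσ, isCyclicDescent_topPos, hx1]
  · by_cases hnext : x + 1 = topPos h
    · have hσ : IsCyclicDescent (valueShift 1 h) x := by
        simp only [IsCyclicDescent, valueShift_apply, eq_topPos_iff.1 hnext, neg_add_cancel,
          ZMod.val_zero, ZMod.val_add_one_of_ne_neg_one (mt eq_topPos_iff.2 hx)]
        omega
      simp [stepWeight, hσ, not_isCyclicDescent_of_apply_add_one (eq_topPos_iff.1 hnext), hx,
        hnext]
    · simp only [stepWeight, if_neg hx, if_neg hnext,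
        isCyclicDescent_valueShift_one_iff (mt eq_topPos_iff.2 hx) (mt eq_topPos_iff.2 hnext)]
      ring

theorem height_valueShift_one (x : ZMod M) :
    height k (valueShift 1 h) x = height k h x + (if 0 = topPos h then (k : ℤ) else 0)
      - (if x = topPos h then (k : ℤ) else 0) := by
  have htel := sum_range_sub' (fun i : ℕ => if (i : ZMod M) = topPos h then (k : ℤ) else 0) x.val
  simp only [Nat.cast_zero, Nat.cast_succ, ZMod.natCast_zmod_val] at htel
  rw [height, height, add_sub_assoc, ← htel, ← sum_add_distrib]
  refine sum_congr rfl fun i _ => ?_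
  rw [stepWeight_valueShift_one]
  ring

theorem totalWeight_valueShift_one : totalWeight k (valueShift 1 h) = totalWeight k h := by
  have hshift : ∑ x : ZMod M, (if x + 1 = topPos h then (k : ℤ) else 0)
      = ∑ x, (if x = topPos h then (k : ℤ) else 0) :=
    Fintype.sum_equiv (Equiv.addRight 1) _ _ fun _ => rfl
  simp only [totalWeight, stepWeight_valueShift_one, sum_sub_distrib, sum_add_distrib, hshift]
  ring

theorem totalWeight_valueShift (c : ZMod M) :
    totalWeight k (valueShift c h) = totalWeight k h := by
  obtain ⟨n, rfl⟩ := ZMod.natCast_zmod_surjective c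
  induction n with
  | zero => simp
  | succ n ih => rw [Nat.cast_succ, valueShift_add, totalWeight_valueShift_one, ih]

theorem minHeight_le (x : ZMod M) : minHeight k h ≤ height k h x := inf'_le _ (mem_univ x)

theorem le_minHeight {m : ℤ} (hm : ∀ x, m ≤ height k h x) : m ≤ minHeight k h :=
  le_inf' _ _ fun x _ => hm x

theorem exists_height_eq_minHeight : ∃ x, height k h x = minHeight k h := by
  obtain ⟨x, -, hx⟩ := exists_mem_eq_inf' univ_nonempty (height k h)
  exact ⟨x, hx.symm⟩

/-- By `height_valueShift_one`, shifting the values by one adds the constant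
`if 0 = topPos h then k else 0` to every height except at `topPos h`, where by `height_topPos`
the new height is one less than the old height at `topPos h + 1`. -/
theorem minHeight_valueShift_one (hk : 1 ≤ k) (hS : totalWeight k h = 0) :
    minHeight k (valueShift 1 h) = minHeight k h + (if 0 = topPos h then (k : ℤ) else 0)
      - (if IsCyclicBallot k h then 1 else 0) := by
  have hshift := height_valueShift_one (k := k) (h := h)
  have htop := height_topPos hS
  have hk' : (1 : ℤ) ≤ k := by exact_mod_cast hk
  obtain ⟨x₀, hx₀⟩ := exists_height_eq_minHeight (k := k) (h := h)
  have hlower (hmin : minHeight k h - (if IsCyclicBallot k h then 1 else 0)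
      ≤ height k h (topPos h + 1) - 1) (x : ZMod M) :
      minHeight k h + (if 0 = topPos h then (k : ℤ) else 0)
        - (if IsCyclicBallot k h then 1 else 0) ≤ height k (valueShift 1 h) x := by
    rw [hshift]
    by_cases hx : x = topPos h
    · rw [if_pos hx, hx, htop]
      linarith
    · rw [if_neg hx]
      split_ifs <;> linarith [minHeight_le (k := k) (h := h) x]
  by_cases hB : IsCyclicBallot k h
  · have hmin : height k h (topPos h + 1) = minHeight k h :=
      le_antisymm (hx₀ ▸ hB x₀) (minHeight_le _)
    refine le_antisymm ?_ (le_minHeight (hlower (by rw [if_pos hB, hmin])))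
    calc minHeight k (valueShift 1 h) ≤ height k (valueShift 1 h) (topPos h) := minHeight_le _
      _ = _ := by rw [hshift, if_pos rfl, if_pos hB, htop, hmin]; ring
  · have hlt : minHeight k h < height k h (topPos h + 1) := by
      obtain ⟨x, hx⟩ := not_forall.1 hB
      linarith [minHeight_le (k := k) (h := h) x]
    have hx₀top : x₀ ≠ topPos h := by
      rintro rfl
      linarith
    refine le_antisymm ?_ (le_minHeight (hlower (by rw [if_neg hB]; linarith)))
    calc minHeight k (valueShift 1 h) ≤ height k (valueShift 1 h) x₀ := minHeight_le _
      _ = _ := by rw [hshift, if_neg hx₀top, if_neg hB, hx₀]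

/-- Summing `minHeight_valueShift_one` over a full cycle of value shifts, the changes of the
minimum cancel, and the largest value lands at position `0` for exactly one shift. -/
theorem card_isCyclicBallot_valueShift (hk : 1 ≤ k) (hS : totalWeight k h = 0) :
    #(univ.filter fun c => IsCyclicBallot k (valueShift c h)) = k := by
  have hstep (c : ZMod M) :
      minHeight k (valueShift (c + 1) h) - minHeight k (valueShift c h)
        = (if 0 = topPos (valueShift c h) then (k : ℤ) else 0)
          - (if IsCyclicBallot k (valueShift c h) then 1 else 0) := by
    rw [valueShift_add, minHeight_valueShift_one hk ((totalWeight_valueShift c).trans hS)]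
    ring
  have htel : ∑ c : ZMod M, (minHeight k (valueShift (c + 1) h) - minHeight k (valueShift c h))
      = 0 := by
    rw [sum_sub_distrib, sub_eq_zero]
    exact Fintype.sum_equiv (Equiv.addRight 1) _ _ fun _ => rfl
  have htop : ∑ c : ZMod M, (if 0 = topPos (valueShift c h) then (k : ℤ) else 0) = k := by
    have hiff (c : ZMod M) : 0 = topPos (valueShift c h) ↔ c = -1 - h 0 := by
      rw [eq_topPos_iff, valueShift_apply, eq_sub_iff_add_eq']
    simp only [hiff, sum_ite_eq', mem_univ, if_true]
  simp only [hstep, sum_sub_distrib, htop, ← natCast_card_filter] at htel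
  omega

theorem normalize_valueShift_mem_balancedPerms {g : Equiv.Perm (ZMod M)}
    (hg : g ∈ balancedPerms k) (c : ZMod M) : normalize (valueShift c g) ∈ balancedPerms k :=
  mem_balancedPerms.2 ⟨normalize_apply_zero,
    (totalWeight_rotate _).trans ((totalWeight_valueShift c).trans (mem_balancedPerms.1 hg).2)⟩

theorem isCyclicBallot_normalize_valueShift {g : Equiv.Perm (ZMod M)}
    (hg : g ∈ balancedPerms k) (c : ZMod M) :
    IsCyclicBallot k (normalize (valueShift c g)) ↔ IsCyclicBallot k (valueShift c g) :=
  isCyclicBallot_rotate ((totalWeight_valueShift c).trans (mem_balancedPerms.1 hg).2) _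

/-- Double counting the pairs `(c, g)` whose value shift by `c` is ballot:
`(c, g) ↦ (c, normalize (valueShift c g))` maps them bijectively onto the pairs whose second
entry is ballot. -/
theorem card_mul_card_balancedPerms (hk : 1 ≤ k) :
    k * #(balancedPerms (M := M) k)
      = M * #((balancedPerms (M := M) k).filter (IsCyclicBallot k)) := by
  set D := balancedPerms (M := M) k
  let P := (univ ×ˢ D).filter fun p : ZMod M × _ => IsCyclicBallot k (valueShift p.1 p.2)
  have hfiber : #P = k * #D := by
    rw [card_filter, sum_product_right, sum_congr rfl fun g hg => ?_, sum_const, smul_eq_mul,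
      mul_comm]
    rw [← card_filter]
    exact card_isCyclicBallot_valueShift hk (mem_balancedPerms.1 hg).2
  have hbij : #P = #((univ : Finset (ZMod M)) ×ˢ D.filter (IsCyclicBallot k)) := by
    refine card_nbij' (fun p => (p.1, normalize (valueShift p.1 p.2)))
      (fun p => (p.1, normalize (valueShift (-p.1) p.2))) ?_ ?_ ?_ ?_ <;> rintro ⟨c, g⟩ hp <;>
      simp only [P, mem_coe, mem_filter, mem_product, mem_univ, true_and] at hp ⊢
    · exact ⟨normalize_valueShift_mem_balancedPerms hp.1 c,
        (isCyclicBallot_normalize_valueShift hp.1 c).2 hp.2⟩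
    · have hmem := normalize_valueShift_mem_balancedPerms hp.1 (-c)
      refine ⟨hmem, (isCyclicBallot_normalize_valueShift hmem c).1 ?_⟩
      have hback := normalize_valueShift_neg (mem_balancedPerms.1 hp.1).1 (-c)
      rw [neg_neg] at hback
      rw [hback]
      exact hp.2
    · rw [normalize_valueShift_neg (mem_balancedPerms.1 hp.1).1]
    · simpa using normalize_valueShift_neg (mem_balancedPerms.1 hp.1).1 (-c)
  rw [← hfiber, hbij, card_product, card_univ, ZMod.card]

theorem card_balancedPerms_eq {n : ℕ} (hk : 1 ≤ k) (hM : M = k * (n + 1)) :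
    #(balancedPerms (M := M) k)
      = (n + 1) * #((balancedPerms (M := M) k).filter (IsCyclicBallot k)) :=
  Nat.eq_of_mul_eq_mul_left hk
    ((card_mul_card_balancedPerms hk).trans (by rw [← mul_assoc, ← hM]))

end Nontrivial

section ConsMax

variable {N : ℕ} (w : Equiv.Perm (Fin N))

/-- `w` read as a cyclic word with the new largest value `N = -1` put in front; the definition
uses that `ZMod (N + 1)` is `Fin (N + 1)`. -/
noncomputable def consMax : Equiv.Perm (ZMod (N + 1)) :=
  (finSuccEquiv N).trans ((Equiv.optionCongr w).trans finSuccEquivLast.symm)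

theorem neg_one_eq_last : (-1 : ZMod (N + 1)) = Fin.last N :=
  ZMod.val_injective _ (ZMod.val_neg_one N)

theorem consMax_apply_zero : consMax w 0 = -1 := by
  rw [neg_one_eq_last]
  show finSuccEquivLast.symm (Equiv.optionCongr w (finSuccEquiv N 0)) = _
  simp

theorem consMax_apply_succ (i : Fin N) : consMax w i.succ = (w i).castSucc := by
  show finSuccEquivLast.symm (Equiv.optionCongr w (finSuccEquiv N i.succ)) = _
  rw [finSuccEquiv_succ]
  simp

theorem val_consMax_natCast_succ {j : ℕ} (hj : j < N) :
    (consMax w ((j + 1 : ℕ) : ZMod (N + 1))).val = (w ⟨j, hj⟩).val := by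
  have hpos : ((j + 1 : ℕ) : ZMod (N + 1)) = Fin.succ ⟨j, hj⟩ := by
    apply ZMod.val_injective
    rw [ZMod.val_cast_of_lt (by omega)]
    rfl
  rw [hpos, consMax_apply_succ]
  rfl

theorem consMax_injective : Function.Injective (consMax (N := N)) := fun w w' hw =>
  Equiv.ext fun i => Fin.castSucc_injective _ <| by
    rw [← consMax_apply_succ, ← consMax_apply_succ, hw]

theorem exists_consMax_eq {g : Equiv.Perm (ZMod (N + 1))} (hg : g 0 = -1) :
    ∃ w, consMax w = g := by
  let σ : Equiv.Perm (Option (Fin N)) := (finSuccEquiv N).symm.trans (g.trans finSuccEquivLast)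
  have hσ : σ none = none := by
    show finSuccEquivLast (g 0) = none
    rw [hg, neg_one_eq_last, finSuccEquivLast_last]
  refine ⟨Equiv.removeNone σ, ?_⟩
  have hopt := map_equiv_removeNone σ
  rw [hσ, Equiv.swap_self, ← Equiv.Perm.one_def, one_mul] at hopt
  ext x
  show finSuccEquivLast.symm ((Equiv.removeNone σ).optionCongr (finSuccEquiv N x)) = g x
  rw [hopt]
  exact (finSuccEquivLast.symm_apply_apply _).trans
    (congrArg g ((finSuccEquiv N).symm_apply_apply x))

theorem card_filter_consMax (p : Equiv.Perm (ZMod (N + 1)) → Prop) [DecidablePred p] :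
    #(univ.filter fun w : Equiv.Perm (Fin N) => p (consMax w))
      = #(univ.filter fun g : Equiv.Perm (ZMod (N + 1)) => g 0 = -1 ∧ p g) := by
  refine card_bij (fun w _ => consMax w) (fun w hw => ?_)
    (fun w _ w' _ hw => consMax_injective hw) (fun g hg => ?_)
  · simp only [mem_filter, mem_univ, true_and] at hw ⊢
    exact ⟨consMax_apply_zero w, hw⟩
  · simp only [mem_filter, mem_univ, true_and] at hg
    obtain ⟨w, rfl⟩ := exists_consMax_eq hg.1
    exact ⟨w, by simpa using hg.2, rfl⟩

theorem isCyclicDescent_consMax_natCast_succ {j : ℕ} (hj : j < N) :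
    IsCyclicDescent (consMax w) ((j + 1 : ℕ) : ZMod (N + 1)) ↔
      ∃ h : j + 1 < N, w ⟨j + 1, h⟩ < w ⟨j, hj⟩ := by
  have hnext : ((j + 1 : ℕ) : ZMod (N + 1)) + 1 = ((j + 1 + 1 : ℕ) : ZMod (N + 1)) := by
    push_cast; ring
  unfold IsCyclicDescent
  rw [hnext, val_consMax_natCast_succ w hj]
  by_cases hj1 : j + 1 < N
  · rw [val_consMax_natCast_succ w hj1]
    exact ⟨fun hlt => ⟨hj1, hlt⟩, fun ⟨_, hlt⟩ => hlt⟩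
  · have hlast : ((j + 1 + 1 : ℕ) : ZMod (N + 1)) = 0 := by
      rw [show j + 1 + 1 = N + 1 by omega, ZMod.natCast_self]
    rw [hlast, consMax_apply_zero, ZMod.val_neg_one]
    simp [hj1, (w ⟨j, hj⟩).isLt.le]

variable [Fact (1 < N + 1)]

theorem sum_range_succ_stepWeight_consMax {ℓ : ℕ} (hℓ : ℓ ≤ N) :
    ∑ i ∈ range (ℓ + 1), stepWeight k (consMax w) i = ℓ + 1 - k * (descentsIn w ℓ + 1) := by
  have htop : (0 : ZMod (N + 1)) = topPos (consMax w) := eq_topPos_iff.2 (consMax_apply_zero w)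
  have hdes : (range ℓ).filter (fun i => IsCyclicDescent (consMax w) ((i + 1 : ℕ) : ZMod (N + 1)))
      = (range ℓ).filter fun i => ∃ h : i + 1 < N, w ⟨i + 1, h⟩ < w ⟨i, Nat.lt_of_succ_lt h⟩ :=
    filter_congr fun i hi =>
      isCyclicDescent_consMax_natCast_succ w ((mem_range.1 hi).trans_le hℓ)
  rw [sum_range_succ', sum_stepWeight (range ℓ) fun i => ((i + 1 : ℕ) : ZMod (N + 1)), hdes,
    Nat.cast_zero, htop, stepWeight_topPos, card_range, descentsIn]
  ring

theorem height_consMax_natCast_succ {ℓ : ℕ} (hℓ : ℓ < N) :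
    height k (consMax w) ((ℓ + 1 : ℕ) : ZMod (N + 1)) = ℓ + 1 - k * (descentsIn w ℓ + 1) := by
  rw [height, ZMod.val_cast_of_lt (by omega), sum_range_succ_stepWeight_consMax w hℓ.le]

theorem totalWeight_consMax : totalWeight k (consMax w) = N + 1 - k * (descents w + 1) := by
  rw [totalWeight, ← ZMod.sum_range_natCast, sum_range_succ_stepWeight_consMax w le_rfl,
    descentsIn_self]

theorem totalWeight_consMax_eq_zero_iff {n : ℕ} (hk : 1 ≤ k) (hN : N + 1 = k * (n + 1)) :
    totalWeight k (consMax w) = 0 ↔ descents w = n := by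
  have hk' : (k : ℤ) ≠ 0 := by exact_mod_cast (by omega : k ≠ 0)
  rw [totalWeight_consMax, sub_eq_zero, ← Nat.cast_add_one, hN]
  push_cast
  rw [mul_right_inj' hk']
  omega

theorem isCyclicBallot_consMax_iff (hk : 1 ≤ k) :
    IsCyclicBallot k (consMax w) ↔ ∀ ℓ < N, k * descentsIn w ℓ ≤ ℓ := by
  have hN : 0 < N := by have := (Fact.out : 1 < N + 1); omega
  have htop : topPos (consMax w) = 0 := (eq_topPos_iff.2 (consMax_apply_zero w)).symm
  have hone : height k (consMax w) 1 = 1 - k := by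
    simpa [descentsIn] using height_consMax_natCast_succ (k := k) w hN
  simp only [IsCyclicBallot, htop, zero_add, hone]
  constructor
  · intro hB ℓ hℓ
    have := hB ((ℓ + 1 : ℕ) : ZMod (N + 1))
    rw [height_consMax_natCast_succ w hℓ] at this
    exact_mod_cast (by linarith : (k : ℤ) * descentsIn w ℓ ≤ ℓ)
  · intro hB x
    rw [← ZMod.natCast_zmod_val x]
    rcases hx : x.val with _ | ℓ
    · rw [Nat.cast_zero, height_zero]
      omega
    · have hℓ : ℓ < N := by have := x.val_lt; omega
      rw [height_consMax_natCast_succ w hℓ]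
      have hkd : (k : ℤ) * descentsIn w ℓ ≤ ℓ := by exact_mod_cast hB ℓ hℓ
      linarith

end ConsMax

theorem isKDyckPerm_iff {n : ℕ} (hk : 1 ≤ k) [Fact (1 < k * n + k - 1 + 1)]
    (w : Equiv.Perm (Fin (k * n + k - 1))) :
    IsKDyckPerm k n w ↔ totalWeight k (consMax w) = 0 ∧ IsCyclicBallot k (consMax w) := by
  have hN : k * n + k - 1 + 1 = k * (n + 1) := by
    rw [Nat.sub_add_cancel (by omega)]
    ring
  rw [IsKDyckPerm, totalWeight_consMax_eq_zero_iff w hk hN, isCyclicBallot_consMax_iff w hk]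
  refine and_congr_right' (forall_congr' fun ℓ => ?_)
  rw [Nat.sub_one_mul_le_sub_iff (descentsIn_le w ℓ)]
  have hM : 1 < k * n + k - 1 + 1 := Fact.out
  constructor <;> intro h hℓ <;> exact h (by omega)

end CyclicPerm

open CyclicPerm in
theorem card_kDyckPerm_eq_general (k n : ℕ) (hk : 2 ≤ k) :
    (Finset.univ.filter (fun w : Equiv.Perm (Fin (k * n + k - 1)) =>
        IsKDyckPerm k n w)).card
      = eulerian n (k * n + k - 1) / (n + 1) := by
  have hk1 : 1 ≤ k := by omega
  have hN : k * n + k - 1 + 1 = k * (n + 1) := by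
    rw [Nat.sub_add_cancel (by omega)]
    ring
  have : Fact (1 < k * n + k - 1 + 1) := ⟨by rw [hN]; nlinarith⟩
  have hdyck : #(univ.filter fun w => IsKDyckPerm k n w)
      = #((balancedPerms (M := k * n + k - 1 + 1) k).filter (IsCyclicBallot k)) := by
    rw [filter_congr fun w _ => isKDyckPerm_iff hk1 w,
      card_filter_consMax fun g => totalWeight k g = 0 ∧ IsCyclicBallot k g, balancedPerms,
      filter_filter]
    simp only [and_assoc]
  have heulerian : eulerian n (k * n + k - 1) = #(balancedPerms (M := k * n + k - 1 + 1) k) := by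
    rw [eulerian, filter_congr fun w _ => (totalWeight_consMax_eq_zero_iff w hk1 hN).symm,
      card_filter_consMax fun g => totalWeight k g = 0, balancedPerms]
  rw [hdyck, heulerian, card_balancedPerms_eq hk1 hN, Nat.mul_div_cancel_left _ n.succ_pos]

/-- The number of permutations in `S_{kn+k-1}` whose ascent/descent vector is
a `(k-1)`-ballot sequence is `A(n, kn+k-1)/(n+1)`. -/
theorem card_kDyckPerm_eq (k n : ℕ) (hk : 2 ≤ k) (hn : 1 ≤ n) :
    (Finset.univ.filter (fun w : Equiv.Perm (Fin (k * n + k - 1)) =>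
        IsKDyckPerm k n w)).card
      = eulerian n (k * n + k - 1) / (n + 1) :=
  card_kDyckPerm_eq_general k n hk
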